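/- arXiv:2511.03914 — 2 statements merged into one kernel-verified Lean document; each statement's English description precedes it below -/
import Mathlib

section
/- If H is a real random variable with mean zero, E[H²] = (1+O(δ))/N, and E|H|^k ≤ C_k/(N q^{k−2}) for all k ≥ 3, then for every r ≥ 2 the r-th cumulant satisfies |C_r(H)| ≤ C'_r/(N q^{r−2}) for a constant C'_r depending only on r and the constants C_k. -/
open MeasureTheory Filter Finset Topology Metric
open scoped ENNReal

/-- The `r`-th cumulant of a real random variable `H`, defined as
`(-1)^r (d^r/dt^r) log E[e^{itH}] |_{t=0}`. -/
noncomputable def cumulant {Ω : Type*} [MeasurableSpace Ω] (μ : Measure Ω)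
    (H : Ω → ℝ) (r : ℕ) : ℂ :=
  (-1 : ℂ) ^ r *
    iteratedDeriv r (fun t : ℝ => Complex.log (∫ ω, Complex.exp (Complex.I * t * H ω) ∂μ)) 0

namespace CumAux
set_option linter.unusedSectionVars false


/-- iterated derivative computed from an explicit derivative sequence on an open set -/
lemma iteratedDeriv_of_seq {s : Set ℝ} (hs : IsOpen s) (F : ℕ → ℝ → ℂ)
    (hF : ∀ n, ∀ x ∈ s, HasDerivAt (F n) (F (n+1) x) x) :
    ∀ n, ∀ x ∈ s, iteratedDeriv n (F 0) x = F n x := by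
  intro n
  induction n with
  | zero => intro x hx; simp
  | succ n ih =>
    intro x hx
    rw [iteratedDeriv_succ]
    have h1 : iteratedDeriv n (F 0) =ᶠ[𝓝 x] F n :=
      eventuallyEq_of_mem (hs.mem_nhds hx) (fun y hy => ih y hy)
    rw [h1.deriv_eq]
    exact (hF n x hx).deriv

/-- Leibniz rule for derivative sequences -/
lemma leibniz_seq {s : Set ℝ} (F G : ℕ → ℝ → ℂ)
    (hF : ∀ n, ∀ x ∈ s, HasDerivAt (F n) (F (n+1) x) x)
    (hG : ∀ n, ∀ x ∈ s, HasDerivAt (G n) (G (n+1) x) x) (n : ℕ) (x : ℝ) (hx : x ∈ s) :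
    HasDerivAt (fun y => ∑ k ∈ range (n+1), (n.choose k : ℂ) * (F k y * G (n-k) y))
      (∑ k ∈ range (n+2), ((n+1).choose k : ℂ) * (F k x * G (n+1-k) x)) x := by
  have h : HasDerivAt (fun y => ∑ k ∈ range (n+1), (n.choose k : ℂ) * (F k y * G (n-k) y))
      (∑ k ∈ range (n+1), (n.choose k : ℂ) *
        (F (k+1) x * G (n-k) x + F k x * G (n-k+1) x)) x := by
    apply HasDerivAt.fun_sum
    intro k _
    exact (((hF k x hx).mul (hG (n-k) x hx))).const_mul _
  convert h using 1
  rw [Finset.sum_choose_succ_mul (fun i j => F i x * G j x) n, ← Finset.sum_add_distrib]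
  refine Finset.sum_congr rfl fun k hk => ?_
  have hkn : k ≤ n := Nat.lt_succ_iff.mp (Finset.mem_range.mp hk)
  have h2 : n - k + 1 = n + 1 - k := by omega
  rw [h2]; ring

/-- derivative of iterated derivatives for smooth functions on an open set -/
lemma hasDerivAt_iteratedDeriv {s : Set ℝ} (hs : IsOpen s) :
    ∀ (n : ℕ) (f : ℝ → ℂ), ContDiffOn ℝ ((⊤ : ℕ∞) : WithTop ℕ∞) f s →
      ∀ x ∈ s, HasDerivAt (iteratedDeriv n f) (iteratedDeriv (n+1) f x) x := by
  intro n
  induction n with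
  | zero =>
    intro f hf x hx
    have hd : DifferentiableAt ℝ f x :=
      (hf.contDiffAt (hs.mem_nhds hx)).differentiableAt (by norm_num)
    simpa [iteratedDeriv_one, iteratedDeriv_zero] using hd.hasDerivAt
  | succ n ih =>
    intro f hf x hx
    have hdf : ContDiffOn ℝ ((⊤ : ℕ∞) : WithTop ℕ∞) (deriv f) s := hf.deriv_of_isOpen hs (by simp)
    have := ih (deriv f) hdf x hx
    simpa [← iteratedDeriv_succ'] using this

/-- smoothness from a global derivative sequence -/
lemma contDiff_of_seq (F : ℕ → ℝ → ℂ) (hF : ∀ n x, HasDerivAt (F n) (F (n+1) x) x) :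
    ContDiff ℝ ((⊤ : ℕ∞) : WithTop ℕ∞) (F 0) := by
  have key : ∀ m : ℕ, iteratedDeriv m (F 0) = F m := by
    intro m
    funext x
    exact iteratedDeriv_of_seq isOpen_univ F (fun n y _ => hF n y) m x (Set.mem_univ x)
  exact contDiff_of_differentiable_iteratedDeriv
    (fun m _ => by rw [key m]; exact fun x => (hF m x).differentiableAt)



/-- recursive constant for cumulant bounds -/
def cumA : ℕ → ℕ
  | n => 1 + ∑ k ∈ (Finset.range n).attach, n.choose k * cumA k
decreasing_by exact Finset.mem_range.mp k.2

lemma cumA_eq (n : ℕ) : cumA n = 1 + ∑ k ∈ Finset.range n, n.choose k * cumA k := by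
  rw [cumA]
  congr 1
  rw [← Finset.sum_attach (Finset.range n) (fun k => n.choose k * cumA k)]

lemma one_le_cumA (n : ℕ) : 1 ≤ cumA n := by rw [cumA_eq]; omega

/-- Hölder for moments: `E|H|^a * E|H|^b ≤ E|H|^(a+b)` on a probability space. -/
lemma moment_mul_le {Ω : Type} [MeasurableSpace Ω] {μ : Measure Ω} [IsProbabilityMeasure μ]
    {H : Ω → ℝ} (hH : Measurable H) (hint : ∀ k : ℕ, Integrable (fun ω => |H ω| ^ k) μ)
    (a b : ℕ) :
    (∫ ω, |H ω| ^ a ∂μ) * (∫ ω, |H ω| ^ b ∂μ) ≤ ∫ ω, |H ω| ^ (a+b) ∂μ := by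
  -- lintegral version
  set g : Ω → ℝ≥0∞ := fun ω => ENNReal.ofReal |H ω| with hg
  have hgm : Measurable g := hH.abs.ennreal_ofReal
  have hconv : ∀ j : ℕ, (∫ ω, |H ω| ^ j ∂μ) = (∫⁻ ω, g ω ^ j ∂μ).toReal := by
    intro j
    rw [MeasureTheory.integral_eq_lintegral_of_nonneg_ae
      (Filter.Eventually.of_forall (fun ω => by positivity))
      ((hH.abs.pow_const j).aestronglyMeasurable)]
    congr 1
    apply lintegral_congr
    intro ω
    rw [hg, ← ENNReal.ofReal_pow (abs_nonneg _)]
  have hfin : ∀ j : ℕ, (∫⁻ ω, g ω ^ j ∂μ) ≠ ⊤ := by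
    intro j
    have h1 := (hint j).hasFiniteIntegral
    rw [MeasureTheory.hasFiniteIntegral_iff_ofReal
      (Filter.Eventually.of_forall (fun ω => by positivity))] at h1
    have : (∫⁻ ω, g ω ^ j ∂μ) = ∫⁻ ω, ENNReal.ofReal (|H ω| ^ j) ∂μ := by
      apply lintegral_congr; intro ω; rw [hg, ← ENNReal.ofReal_pow (abs_nonneg _)]
    rw [this]
    exact h1.ne
  -- the key ENNReal inequality
  have key : (∫⁻ ω, g ω ^ a ∂μ) * (∫⁻ ω, g ω ^ b ∂μ) ≤ ∫⁻ ω, g ω ^ (a+b) ∂μ := by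
    rcases Nat.eq_zero_or_pos a with ha | ha
    · subst ha; simp
    rcases Nat.eq_zero_or_pos b with hb | hb
    · subst hb; simp
    have hab : 0 < a + b := by omega
    -- single-factor bound
    have single : ∀ c d : ℕ, 0 < c → 0 < d →
        (∫⁻ ω, g ω ^ c ∂μ) ≤ (∫⁻ ω, g ω ^ (c+d) ∂μ) ^ ((c:ℝ)/(c+d)) := by
      intro c d hc hd
      have hc' : (0:ℝ) < c := by exact_mod_cast hc
      have hd' : (0:ℝ) < d := by exact_mod_cast hd
      have hpq : Real.HolderConjugate ((c+d : ℝ)/c) ((c+d:ℝ)/d) := by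
        constructor
        · rw [inv_div, inv_div, inv_one, ← add_div, div_self (by positivity)]
        · positivity
        · positivity
      have h := ENNReal.lintegral_mul_le_Lp_mul_Lq μ hpq
        (f := fun ω => g ω ^ c) (g := fun _ => 1)
        ((hgm.pow_const c).aemeasurable) aemeasurable_const
      simp only [Pi.mul_apply, mul_one] at h
      refine le_trans h ?_
      have h1 : (∫⁻ ω, (g ω ^ c) ^ ((c+d:ℝ)/c) ∂μ) = ∫⁻ ω, g ω ^ (c+d) ∂μ := by
        apply lintegral_congr; intro ω
        rw [← ENNReal.rpow_natCast (g ω) c, ← ENNReal.rpow_mul, ← ENNReal.rpow_natCast (g ω) (c+d)]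
        congr 1
        push_cast
        field_simp
      have h2 : (∫⁻ _, (1:ℝ≥0∞) ^ ((c+d:ℝ)/d) ∂μ) = 1 := by simp
      rw [h1, h2, ENNReal.one_rpow, mul_one]
      apply le_of_eq
      congr 1
      rw [one_div, inv_div]
    have h1 := single a b ha hb
    have h2 := single b a hb ha
    have h2' : (∫⁻ ω, g ω ^ b ∂μ) ≤ (∫⁻ ω, g ω ^ (a+b) ∂μ) ^ ((b:ℝ)/(a+b)) := by
      rwa [Nat.add_comm b a, add_comm (b:ℝ)] at h2
    calc (∫⁻ ω, g ω ^ a ∂μ) * (∫⁻ ω, g ω ^ b ∂μ)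
        ≤ (∫⁻ ω, g ω ^ (a+b) ∂μ) ^ ((a:ℝ)/(a+b)) * (∫⁻ ω, g ω ^ (a+b) ∂μ) ^ ((b:ℝ)/(a+b)) :=
          mul_le_mul' h1 h2'
      _ = (∫⁻ ω, g ω ^ (a+b) ∂μ) ^ ((a:ℝ)/(a+b) + (b:ℝ)/(a+b)) :=
          (ENNReal.rpow_add_of_nonneg _ _ (by positivity) (by positivity)).symm
      _ = ∫⁻ ω, g ω ^ (a+b) ∂μ := by
          rw [← add_div, div_self (by positivity), ENNReal.rpow_one]
  rw [hconv a, hconv b, hconv (a+b), ← ENNReal.toReal_mul]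
  exact ENNReal.toReal_mono (hfin (a+b)) key



variable {Ω : Type} [MeasurableSpace Ω] {μ : Measure Ω} [IsProbabilityMeasure μ]
  {H : Ω → ℝ}

lemma norm_term (n : ℕ) (t : ℝ) (w : Ω) :
    ‖(Complex.I * H w)^n * Complex.exp (t * (Complex.I * H w))‖ = |H w| ^ n := by
  rw [norm_mul, norm_pow]
  have h1 : ‖Complex.I * (H w : ℂ)‖ = |H w| := by
    rw [norm_mul, Complex.norm_I, one_mul, Complex.norm_real, Real.norm_eq_abs]
  have h2 : ‖Complex.exp ((t:ℂ) * (Complex.I * (H w : ℂ)))‖ = 1 := by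
    rw [Complex.norm_exp]
    simp
  rw [h1, h2, mul_one]

lemma meas_term (hH : Measurable H) (n : ℕ) (t : ℝ) :
    AEStronglyMeasurable (fun w => (Complex.I * H w)^n *
      Complex.exp (t * (Complex.I * H w))) μ := by
  apply Measurable.aestronglyMeasurable
  fun_prop

lemma int_term (hH : Measurable H) (hint : ∀ k : ℕ, Integrable (fun w => |H w| ^ k) μ)
    (n : ℕ) (t : ℝ) :
    Integrable (fun w => (Complex.I * H w)^n * Complex.exp (t * (Complex.I * H w))) μ := by
  apply Integrable.mono' (hint n) (meas_term hH n t)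
  exact Filter.Eventually.of_forall (fun w => le_of_eq (norm_term n t w))

lemma hasDerivAt_phi (hH : Measurable H) (hint : ∀ k : ℕ, Integrable (fun w => |H w| ^ k) μ)
    (n : ℕ) (t : ℝ) :
    HasDerivAt (fun s : ℝ => ∫ w, (Complex.I * H w)^n * Complex.exp (s * (Complex.I * H w)) ∂μ)
      (∫ w, (Complex.I * H w)^(n+1) * Complex.exp (t * (Complex.I * H w)) ∂μ) t := by
  have key := hasDerivAt_integral_of_dominated_loc_of_deriv_le (μ := μ)
    (F := fun (s : ℝ) w => (Complex.I * H w)^n * Complex.exp (s * (Complex.I * H w)))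
    (F' := fun (s : ℝ) w => (Complex.I * H w)^(n+1) * Complex.exp (s * (Complex.I * H w)))
    (bound := fun w => |H w| ^ (n+1)) (x₀ := t) (Metric.ball_mem_nhds t one_pos)
    (Filter.Eventually.of_forall (fun s => meas_term hH n s))
    (int_term hH hint n t) (meas_term hH (n+1) t)
    (Filter.Eventually.of_forall (fun w s _ => le_of_eq (norm_term (n+1) s w)))
    (hint (n+1))
    (Filter.Eventually.of_forall (fun w s _ => ?_))
  · exact key.2
  · -- HasDerivAt (fun s => c^n * exp (s * c)) (c^(n+1) * exp (s*c)) s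
    set c : ℂ := Complex.I * H w with hc
    have h1 : HasDerivAt (fun z : ℂ => c^n * Complex.exp (z * c))
        (c^n * (Complex.exp ((s:ℂ) * c) * (1 * c))) (s : ℂ) := by
      simpa using (((hasDerivAt_id (s:ℂ)).mul_const c).cexp).const_mul (c^n)
    have h2 := h1.comp_ofReal
    refine h2.congr_deriv ?_
    rw [hc]; ring


end CumAux

theorem cumulant_bound_sparse (C : ℝ) (Ck : ℕ → ℝ) (r : ℕ) (hr : 2 ≤ r) :
    ∃ C' : ℝ, 0 < C' ∧
      ∀ (N q : ℝ), 1 ≤ N → 1 ≤ q →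
      ∀ (Ω : Type) (_ : MeasurableSpace Ω) (μ : Measure Ω), IsProbabilityMeasure μ →
      ∀ (H : Ω → ℝ), Measurable H →
        (∀ k : ℕ, Integrable (fun ω => |H ω| ^ k) μ) →
        (∫ ω, H ω ∂μ) = 0 →
        (∫ ω, (H ω) ^ 2 ∂μ) ≤ C / N →
        (∀ k : ℕ, 3 ≤ k → (∫ ω, |H ω| ^ k ∂μ) ≤ Ck k / (N * q ^ (k - 2))) →
        ‖cumulant μ H r‖ ≤ C' / (N * q ^ (r - 2)) := by
  classical
  refine ⟨((CumAux.cumA (r-1) : ℝ) + 1) * (|C| + |Ck r| + 1), by positivity, ?_⟩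
  intro N q hN hq Ω mΩ μ hμ H hH hint hEH hE2 hEk
  have hN0 : (0:ℝ) < N := by linarith
  have hq0 : (0:ℝ) < q := by linarith
  set φ : ℕ → ℝ → ℂ :=
    fun n t => ∫ w, (Complex.I * H w)^n * Complex.exp (t * (Complex.I * H w)) ∂μ with hφdef
  set M : ℕ → ℝ := fun k => ∫ w, |H w|^k ∂μ with hMdef
  have hΦ : ∀ n t, HasDerivAt (φ n) (φ (n+1) t) t := fun n t => CumAux.hasDerivAt_phi hH hint n t
  have hMnonneg : ∀ k, 0 ≤ M k := fun k => integral_nonneg (fun w => by positivity)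
  have habsφ : ∀ n t, ‖φ n t‖ ≤ M n := by
    intro n t
    refine le_trans (norm_integral_le_integral_norm _) (le_of_eq ?_)
    exact integral_congr_ae (Filter.Eventually.of_forall (fun w => CumAux.norm_term n t w))
  have hφ00 : φ 0 0 = 1 := by
    simp [hφdef]
  have hφ10 : φ 1 0 = 0 := by
    have h1 : φ 1 0 = ∫ w, Complex.I * (H w : ℂ) ∂μ := by
      simp [hφdef]
    rw [h1, integral_const_mul]
    have h2 : ∫ (a:Ω), ((H a : ℝ):ℂ) ∂μ = ((∫ a, H a ∂μ : ℝ):ℂ) := integral_ofReal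
    rw [h2, hEH]
    simp
  have hcont : Continuous (φ 0) := by
    rw [continuous_iff_continuousAt]; exact fun t => (hΦ 0 t).continuousAt
  set U : Set ℝ := {t | 0 < (φ 0 t).re} with hUdef
  have hUopen : IsOpen U := isOpen_lt continuous_const (Complex.continuous_re.comp hcont)
  have h0U : (0:ℝ) ∈ U := by simp [hUdef, hφ00]
  have hslit : ∀ t ∈ U, φ 0 t ∈ Complex.slitPlane := fun t ht => Or.inl ht
  have hφ0ne : ∀ t ∈ U, φ 0 t ≠ 0 := fun t ht => Complex.slitPlane_ne_zero (hslit t ht)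
  set L : ℝ → ℂ := fun t => Complex.log (φ 0 t) with hLdef
  set R : ℝ → ℂ := fun t => φ 1 t / φ 0 t with hRdef
  have hLd : ∀ t ∈ U, HasDerivAt L (R t) t := fun t ht => (hΦ 0 t).clog_real (hslit t ht)
  have hsmooth : ∀ n, ContDiff ℝ ((⊤ : ℕ∞) : WithTop ℕ∞) (φ n) :=
    fun n => CumAux.contDiff_of_seq (fun j => φ (n+j)) (fun j x => hΦ (n+j) x)
  have hRsmooth : ContDiffOn ℝ ((⊤ : ℕ∞) : WithTop ℕ∞) R U := by
    have h1 : ContDiffOn ℝ ((⊤ : ℕ∞) : WithTop ℕ∞)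
        (fun t => φ 1 t * (φ 0 t)⁻¹) U :=
      ((hsmooth 1).contDiffOn).mul (((hsmooth 0).contDiffOn).inv hφ0ne)
    refine h1.congr (fun x _ => ?_)
    simp only [hRdef, div_eq_mul_inv]
  have hψseq : ∀ k, ∀ x ∈ U, HasDerivAt (iteratedDeriv k R) (iteratedDeriv (k+1) R x) x :=
    fun k => CumAux.hasDerivAt_iteratedDeriv hUopen k R hRsmooth
  set ψ : ℕ → ℂ := fun k => iteratedDeriv k R 0 with hψdef
  have hrec : ∀ n : ℕ,
      φ (n+1) 0 = ∑ k ∈ range (n+1), (n.choose k : ℂ) * (ψ k * φ (n-k) 0) := by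
    intro n
    set P : ℕ → ℝ → ℂ :=
      fun m x => ∑ k ∈ range (m+1), (m.choose k : ℂ) * (iteratedDeriv k R x * φ (m-k) x)
      with hPdef
    have hPseq : ∀ m, ∀ x ∈ U, HasDerivAt (P m) (P (m+1) x) x :=
      fun m x hx => CumAux.leibniz_seq _ _ hψseq (fun j y _ => hΦ j y) m x hx
    have hP0 : φ 1 =ᶠ[𝓝 0] P 0 := by
      refine eventuallyEq_of_mem (hUopen.mem_nhds h0U) (fun x hx => ?_)
      have : P 0 x = R x * φ 0 x := by simp [hPdef]
      rw [this, hRdef]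
      field_simp [hφ0ne x hx]
    calc φ (n+1) 0 = iteratedDeriv n (φ 1) 0 :=
          (CumAux.iteratedDeriv_of_seq isOpen_univ (fun j => φ (j+1))
            (fun j x _ => hΦ (j+1) x) n 0 (Set.mem_univ 0)).symm
      _ = iteratedDeriv n (P 0) 0 := hP0.iteratedDeriv_eq n
      _ = P n 0 := CumAux.iteratedDeriv_of_seq hUopen P hPseq n 0 h0U
  have hbound : ∀ n : ℕ, ‖ψ n‖ ≤ (CumAux.cumA n : ℝ) * M (n+1) := by
    intro n
    induction n using Nat.strong_induction_on with
    | _ n ih =>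
    have h1 := hrec n
    rw [Finset.sum_range_succ, Nat.sub_self, Nat.choose_self, hφ00] at h1
    have hψn : ψ n = φ (n+1) 0 - ∑ k ∈ range n, (n.choose k : ℂ) * (ψ k * φ (n-k) 0) := by
      rw [h1]; push_cast; ring
    have hterm : ∀ k ∈ range n, ‖(n.choose k : ℂ) * (ψ k * φ (n-k) 0)‖ ≤
        (n.choose k : ℝ) * (CumAux.cumA k : ℝ) * M (n+1) := by
      intro k hk
      have hkn : k < n := Finset.mem_range.mp hk
      have hMM : M (k+1) * M (n-k) ≤ M (n+1) := by
        have := CumAux.moment_mul_le hH hint (k+1) (n-k)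
        rwa [show k+1+(n-k) = n+1 by omega] at this
      have h2 : ‖(n.choose k : ℂ) * (ψ k * φ (n-k) 0)‖ =
          (n.choose k : ℝ) * (‖ψ k‖ * ‖φ (n-k) 0‖) := by
        rw [norm_mul, norm_mul, Complex.norm_natCast]
      rw [h2]
      calc (n.choose k : ℝ) * (‖ψ k‖ * ‖φ (n-k) 0‖)
          ≤ (n.choose k : ℝ) * (((CumAux.cumA k : ℝ) * M (k+1)) * M (n-k)) := by
            have hpk := ih k hkn
            have hpφ := habsφ (n-k) 0
            gcongr
        _ = (n.choose k : ℝ) * (CumAux.cumA k : ℝ) * (M (k+1) * M (n-k)) := by ring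
        _ ≤ (n.choose k : ℝ) * (CumAux.cumA k : ℝ) * M (n+1) := by
            have : (0:ℝ) ≤ (n.choose k : ℝ) * (CumAux.cumA k : ℝ) := by positivity
            exact mul_le_mul_of_nonneg_left hMM this
    have hA : ((CumAux.cumA n : ℝ)) * M (n+1) =
        M (n+1) + ∑ k ∈ range n, (n.choose k : ℝ) * (CumAux.cumA k : ℝ) * M (n+1) := by
      rw [CumAux.cumA_eq n]
      push_cast
      rw [add_mul, one_mul, Finset.sum_mul]
    rw [hψn, hA]
    calc ‖φ (n+1) 0 - ∑ k ∈ range n, (n.choose k : ℂ) * (ψ k * φ (n-k) 0)‖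
        ≤ ‖φ (n+1) 0‖ + ‖∑ k ∈ range n, (n.choose k : ℂ) * (ψ k * φ (n-k) 0)‖ :=
          norm_sub_le _ _
      _ ≤ M (n+1) + ∑ k ∈ range n, (n.choose k : ℝ) * (CumAux.cumA k : ℝ) * M (n+1) := by
          refine add_le_add (habsφ (n+1) 0) ?_
          exact le_trans (norm_sum_le _ _) (Finset.sum_le_sum hterm)
  -- identify the cumulant with ψ (r-1)
  have hLeq : (fun t : ℝ => Complex.log (∫ w, Complex.exp (Complex.I * t * H w) ∂μ)) = L := by
    funext t
    rw [hLdef]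
    simp only [hφdef]
    congr 1
    refine integral_congr_ae (Filter.Eventually.of_forall (fun w => ?_))
    show Complex.exp (Complex.I * t * H w) =
      (Complex.I * H w)^0 * Complex.exp ((t:ℂ) * (Complex.I * H w))
    rw [pow_zero, one_mul]
    congr 1
    ring
  obtain ⟨n, rfl⟩ : ∃ n, r = n + 1 := ⟨r-1, by omega⟩
  have hcum : ‖cumulant μ H (n+1)‖ = ‖ψ n‖ := by
    unfold cumulant
    rw [hLeq]
    have hdeq : deriv L =ᶠ[𝓝 0] R :=
      eventuallyEq_of_mem (hUopen.mem_nhds h0U) (fun t ht => (hLd t ht).deriv)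
    have : iteratedDeriv (n+1) L 0 = ψ n := by
      rw [iteratedDeriv_succ', hψdef]
      exact hdeq.iteratedDeriv_eq n
    rw [this]
    simp
  rw [hcum]
  have hfinal : ‖ψ n‖ ≤ (CumAux.cumA n : ℝ) * M (n+1) := hbound n
  have hAn : (1:ℝ) ≤ (CumAux.cumA n : ℝ) := by exact_mod_cast CumAux.one_le_cumA n
  have hn1 : n + 1 - 1 = n := by omega
  rw [hn1]
  set A : ℝ := (CumAux.cumA n : ℝ) with hAdef
  set E : ℝ := |C| + |Ck (n+1)| + 1 with hEdef
  have hE1 : (1:ℝ) ≤ E := by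
    rw [hEdef]
    have := abs_nonneg C
    have := abs_nonneg (Ck (n+1))
    linarith
  rcases Nat.lt_or_ge (n+1) 3 with hr3 | hr3
  · -- r = 2, n = 1
    have hn : n = 1 := by omega
    subst hn
    have hM2 : M 2 ≤ C / N := by
      have : M 2 = ∫ w, (H w)^2 ∂μ := by
        rw [hMdef]
        exact integral_congr_ae (Filter.Eventually.of_forall (fun w => sq_abs (H w)))
      rw [this]; exact hE2
    have hq1 : q ^ (1 + 1 - 2) = 1 := by norm_num
    rw [hq1, mul_one]
    calc ‖ψ 1‖ ≤ A * M 2 := hfinal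
      _ ≤ A * (C / N) := by
          apply mul_le_mul_of_nonneg_left hM2 (by linarith)
      _ = (A * C) / N := by ring
      _ ≤ ((A + 1) * E) / N := by
          have hC : C ≤ |C| := le_abs_self C
          have k1 : A * C ≤ A * |C| := mul_le_mul_of_nonneg_left hC (by linarith)
          have k2 : A * |C| ≤ (A + 1) * E := by
            rw [hEdef]
            have h0 : (0:ℝ) ≤ |Ck (1+1)| := abs_nonneg _
            have h1 : (0:ℝ) ≤ |C| := abs_nonneg _
            nlinarith
          rw [div_le_div_iff_of_pos_right hN0]
          linarith
      _ = (A + 1) * E / N := by ring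
  · -- r ≥ 3
    have hMr : M (n+1) ≤ Ck (n+1) / (N * q ^ (n+1-2)) := hEk (n+1) hr3
    have hD0 : (0:ℝ) < N * q ^ (n+1-2) := by positivity
    calc ‖ψ n‖ ≤ A * M (n+1) := hfinal
      _ ≤ A * (Ck (n+1) / (N * q ^ (n+1-2))) := by
          apply mul_le_mul_of_nonneg_left hMr (by linarith)
      _ = (A * Ck (n+1)) / (N * q ^ (n+1-2)) := by ring
      _ ≤ ((A + 1) * E) / (N * q ^ (n+1-2)) := by
          have hC : Ck (n+1) ≤ |Ck (n+1)| := le_abs_self _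
          have k1 : A * Ck (n+1) ≤ A * |Ck (n+1)| := mul_le_mul_of_nonneg_left hC (by linarith)
          have k2 : A * |Ck (n+1)| ≤ (A + 1) * E := by
            rw [hEdef]
            have h0 : (0:ℝ) ≤ |Ck (n+1)| := abs_nonneg _
            have h1 : (0:ℝ) ≤ |C| := abs_nonneg _
            nlinarith
          rw [div_le_div_iff_of_pos_right hD0]
          linarith
      _ = (A + 1) * E / (N * q ^ (n+1-2)) := by ring
end

section
/- For the Stieltjes transform m(z) of the semicircle law, one has the identity (z + m(z))⁻¹ = −m(z) for all z in the upper half-plane. -/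
open MeasureTheory

noncomputable def rhoSC (x : ℝ) : ℝ := (1 / (2 * Real.pi)) * Real.sqrt (max (4 - x ^ 2) 0)

noncomputable def mSC (z : ℂ) : ℂ := ∫ x : ℝ, (rhoSC x : ℂ) / ((x : ℂ) - z)

namespace MSCaux

noncomputable def vv (z : ℂ) : ℂ := Complex.exp (Complex.log (4 - z ^ 2) / 2)

noncomputable def NN (z : ℂ) (x : ℝ) : ℂ :=
  4 - z * x + vv z * (Real.sqrt (4 - x ^ 2) : ℝ)

noncomputable def GG (z : ℂ) (x : ℝ) : ℂ :=
  (1 / (2 * (Real.pi : ℂ))) * (((Real.sqrt (4 - x ^ 2) : ℝ) : ℂ)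
    - z * (Real.arcsin (x / 2) : ℝ)
    - vv z * (Complex.log (NN z x) - Complex.log ((x : ℂ) - z)))

variable {z : ℂ}

lemma h4z (hz : 0 < z.im) : (4 : ℂ) - z ^ 2 ≠ 0 := by
  intro h
  have h' : z ^ 2 = 4 := by linear_combination -h
  have him : (z ^ 2).im = 0 := by rw [h']; simp
  have hre : (z ^ 2).re = 4 := by rw [h']; simp
  rw [sq, Complex.mul_im] at him
  rw [sq, Complex.mul_re] at hre
  have ha : z.re = 0 := by
    rcases mul_eq_zero.mp (by linarith : z.re * z.im = 0) with h1 | h1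
    · exact h1
    · exact absurd h1 hz.ne'
  rw [ha] at hre
  nlinarith [hz]

lemma slit4z (hz : 0 < z.im) : (4 : ℂ) - z ^ 2 ∈ Complex.slitPlane := by
  rw [Complex.mem_slitPlane_iff]
  by_cases ha : z.re = 0
  · left
    simp [Complex.sub_re, sq, Complex.mul_re, ha]
    nlinarith [sq_nonneg z.im]
  · right
    simp [Complex.sub_im, sq, Complex.mul_im]
    intro h
    rcases mul_eq_zero.mp (by linarith : z.re * z.im = 0) with h1 | h1
    · exact ha h1
    · exact hz.ne' h1

lemma vv_sq (hz : 0 < z.im) : vv z ^ 2 = 4 - z ^ 2 := by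
  rw [vv, sq, ← Complex.exp_add]
  rw [show Complex.log (4 - z ^ 2) / 2 + Complex.log (4 - z ^ 2) / 2
      = Complex.log (4 - z ^ 2) by ring]
  exact Complex.exp_log (h4z hz)

lemma vv_ne : vv z ≠ 0 := Complex.exp_ne_zero _

lemma log_half_im : (Complex.log (4 - z ^ 2) / 2).im = Complex.arg (4 - z ^ 2) / 2 := by
  rw [show (Complex.log (4 - z ^ 2) / 2).im = (Complex.log (4 - z ^ 2)).im / 2 by
    simp [Complex.div_im, Complex.normSq]]
  rw [Complex.log_im]

lemma arg_lt (hz : 0 < z.im) : |Complex.arg (4 - z ^ 2)| < Real.pi :=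
  abs_lt.mpr ⟨Complex.neg_pi_lt_arg _, lt_of_le_of_ne (Complex.arg_le_pi _)
    (Complex.mem_slitPlane_iff_arg.mp (slit4z hz)).1⟩

lemma vv_re_pos (hz : 0 < z.im) : 0 < (vv z).re := by
  rw [vv, Complex.exp_re, log_half_im]
  have h := arg_lt hz
  have hπ := Real.pi_pos
  apply mul_pos (Real.exp_pos _)
  apply Real.cos_pos_of_mem_Ioo
  constructor
  · rw [abs_lt] at h; linarith [h.1]
  · rw [abs_lt] at h; linarith [h.2]

lemma vv_im_rel (hz : 0 < z.im) : (vv z).re * (vv z).im = -(z.re * z.im) := by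
  have h := vv_sq hz
  have h2 : (vv z ^ 2).im = ((4 : ℂ) - z ^ 2).im := by rw [h]
  rw [sq, Complex.mul_im] at h2
  simp only [Complex.sub_im, sq, Complex.mul_im] at h2
  norm_num at h2
  linarith

lemma NN_slit (hz : 0 < z.im) (x : ℝ) : NN z x ∈ Complex.slitPlane := by
  have hr := vv_re_pos hz
  have hrel := vv_im_rel hz
  have hs : (0 : ℝ) ≤ Real.sqrt (4 - x ^ 2) := Real.sqrt_nonneg _
  set s := Real.sqrt (4 - x ^ 2)
  have hre : (NN z x).re = 4 - z.re * x + (vv z).re * s := by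
    simp [NN, Complex.add_re, Complex.sub_re, Complex.mul_re, s]
  have him : (NN z x).im = -(z.im * x) + (vv z).im * s := by
    simp [NN, Complex.add_im, Complex.sub_im, Complex.mul_im, s]
  rw [Complex.mem_slitPlane_iff]
  by_cases h0 : (NN z x).im = 0
  · left
    rw [hre]
    rw [him] at h0
    have hx : (vv z).re * x = -(z.re * s) := by
      have h1 : z.im * ((vv z).re * x) = z.im * (-(z.re * s)) := by
        have : (vv z).re * (z.im * x) = (vv z).re * ((vv z).im * s) := by
          rw [mul_eq_mul_left_iff]; left; linarith
        nlinarith [hrel]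
      exact mul_left_cancel₀ hz.ne' h1
    have hax : z.re * ((vv z).re * x) = -(z.re * (z.re * s)) := by rw [hx]; ring
    have key : 0 < (vv z).re * (4 - z.re * x + (vv z).re * s) := by
      nlinarith [hax, mul_nonneg hs (sq_nonneg z.re), mul_nonneg (mul_nonneg hr.le hr.le) hs]
    rcases mul_pos_iff.mp key with ⟨_, h⟩ | ⟨h1, _⟩
    · exact h
    · linarith
  · right; exact h0

lemma NN_ne (hz : 0 < z.im) (x : ℝ) : NN z x ≠ 0 := Complex.slitPlane_ne_zero (NN_slit hz x)

lemma xz_ne (hz : 0 < z.im) (x : ℝ) : (x : ℂ) - z ≠ 0 := by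
  intro h
  have : ((x : ℂ) - z).im = 0 := by rw [h]; simp
  simp [Complex.sub_im] at this
  exact hz.ne' this

lemma xz_slit (hz : 0 < z.im) (x : ℝ) : (x : ℂ) - z ∈ Complex.slitPlane := by
  rw [Complex.mem_slitPlane_iff]
  right
  simp [Complex.sub_im]
  exact hz.ne'

lemma sqrt_half (x : ℝ) (hx : x ∈ Set.Ioo (-2 : ℝ) 2) :
    Real.sqrt (1 - (x / 2) ^ 2) = Real.sqrt (4 - x ^ 2) / 2 := by
  rw [show (1 : ℝ) - (x / 2) ^ 2 = (4 - x ^ 2) / 4 by ring]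
  rw [Real.sqrt_div (by nlinarith [hx.1, hx.2] : (0:ℝ) ≤ 4 - x ^ 2) 4]
  rw [show (4:ℝ) = 2 ^ 2 by norm_num, Real.sqrt_sq (by norm_num : (0:ℝ) ≤ 2)]

lemma GG_deriv (hz : 0 < z.im) (x : ℝ) (hx : x ∈ Set.Ioo (-2 : ℝ) 2) :
    HasDerivAt (GG z) ((rhoSC x : ℂ) / ((x : ℂ) - z)) x := by
  obtain ⟨hx1, hx2⟩ := hx
  have h4x : (0:ℝ) < 4 - x ^ 2 := by nlinarith
  set s := Real.sqrt (4 - x ^ 2) with hs_def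
  have hs_pos : 0 < s := Real.sqrt_pos.mpr h4x
  have hs2 : s ^ 2 = 4 - x ^ 2 := Real.sq_sqrt h4x.le
  have hinner : HasDerivAt (fun y : ℝ => 4 - y ^ 2) (-(2 * x)) x := by
    simpa using ((hasDerivAt_pow 2 x).const_sub 4)
  have hsqrt : HasDerivAt (fun y : ℝ => Real.sqrt (4 - y ^ 2)) (-x / s) x := by
    have h := (Real.hasDerivAt_sqrt h4x.ne').comp x hinner
    have e : -x / s = 1 / (2 * s) * -(2 * x) := by field_simp <;> ring
    rw [e]; exact h
  have h1 : x / 2 ≠ -1 := by intro h; rw [div_eq_iff (by norm_num : (2:ℝ) ≠ 0)] at h; nlinarith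
  have h2 : x / 2 ≠ 1 := by intro h; rw [div_eq_iff (by norm_num : (2:ℝ) ≠ 0)] at h; nlinarith
  have harcsin : HasDerivAt (fun y : ℝ => Real.arcsin (y / 2)) (1 / s) x := by
    have h := (Real.hasDerivAt_arcsin h1 h2).comp x ((hasDerivAt_id x).div_const 2)
    have e : 1 / s = 1 / Real.sqrt (1 - (x / 2) ^ 2) * (1 / 2) := by
      rw [sqrt_half x ⟨hx1, hx2⟩, ← hs_def]
      field_simp
    rw [e]; exact h
  have hsqrtC : HasDerivAt (fun y : ℝ => ((Real.sqrt (4 - y ^ 2) : ℝ) : ℂ)) ((-x / s : ℝ) : ℂ) x :=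
    hsqrt.ofReal_comp
  have harcsinC : HasDerivAt (fun y : ℝ => z * ((Real.arcsin (y / 2) : ℝ) : ℂ))
      (z * ((1 / s : ℝ) : ℂ)) x := (harcsin.ofReal_comp).const_mul z
  have hxC : HasDerivAt (fun y : ℝ => ((y : ℝ) : ℂ)) 1 x := by
    simpa using (hasDerivAt_id x).ofReal_comp
  have hNN : HasDerivAt (NN z) (-z + vv z * ((-x / s : ℝ) : ℂ)) x := by
    have ha : HasDerivAt (fun y : ℝ => (4:ℂ) - z * (y:ℂ)) (-z) x := by
      simpa using (hxC.const_mul z).const_sub 4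
    have hb := ha.add (hsqrtC.const_mul (vv z))
    exact hb
  have hlogN : HasDerivAt (fun y : ℝ => Complex.log (NN z y))
      ((NN z x)⁻¹ * (-z + vv z * ((-x / s : ℝ) : ℂ))) x :=
    (Complex.hasDerivAt_log (NN_slit hz x)).comp x hNN
  have hlogxz : HasDerivAt (fun y : ℝ => Complex.log ((y:ℂ) - z)) (((x:ℂ) - z)⁻¹ * 1) x :=
    by have := (Complex.hasDerivAt_log (xz_slit hz x)).comp x (hxC.sub_const z); exact this
  have hG : HasDerivAt (GG z)
      ((1 / (2 * (Real.pi : ℂ))) * (((-x / s : ℝ) : ℂ) - z * ((1 / s : ℝ) : ℂ)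
        - vv z * ((NN z x)⁻¹ * (-z + vv z * ((-x / s : ℝ) : ℂ)) - ((x:ℂ) - z)⁻¹ * 1))) x := by
    exact (((hsqrtC.sub harcsinC).sub ((hlogN.sub hlogxz).const_mul (vv z))).const_mul _)
  convert hG using 1
  have hmax : max (4 - x ^ 2) 0 = 4 - x ^ 2 := max_eq_left h4x.le
  rw [rhoSC, hmax]
  have hv2 := vv_sq hz
  have hN0 := NN_ne hz x
  have hxz0 := xz_ne hz x
  have hπ : (Real.pi : ℂ) ≠ 0 := by exact_mod_cast Real.pi_ne_zero
  have hs0 : (s : ℂ) ≠ 0 := by exact_mod_cast hs_pos.ne'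
  have hs2c : (s : ℂ) ^ 2 = 4 - (x:ℂ) ^ 2 := by exact_mod_cast hs2
  have hNx : NN z x = 4 - z * (x:ℂ) + vv z * (s : ℂ) := rfl
  rw [hNx]
  push_cast
  rw [← hs_def]
  have hN0' : (4 : ℂ) - z * (x:ℂ) + vv z * (s:ℂ) ≠ 0 := by rw [← hNx]; exact hN0
  field_simp [hN0', hπ, hs0, hxz0]
  have hN0'' : (4 : ℂ) - (x:ℂ) * z + (s:ℂ) * vv z ≠ 0 := by
    rw [mul_comm (x:ℂ) z, mul_comm (s:ℂ) (vv z)]; exact hN0'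
  have hA : ((x:ℂ) - z) * (-((s:ℂ) * z) + -((x:ℂ) * vv z))
      = ((s:ℂ) - vv z) * (4 - (x:ℂ) * z + (s:ℂ) * vv z) := by
    linear_combination (-vv z) * hs2c + (s:ℂ) * hv2
  rw [hA, mul_div_assoc, div_self hN0'', mul_one]
  linear_combination hs2c - hv2
  /- linear_combination ((-32)*z*(Real.pi:ℂ) + (8)*z^3*(Real.pi:ℂ) + (32)*(x:ℂ)*(Real.pi:ℂ) + (-2)*(x:ℂ)*z^4*(Real.pi:ℂ) + (-8)*(x:ℂ)^2*z*(Real.pi:ℂ) + (2)*(x:ℂ)^2*z^3*(Real.pi:ℂ) + (8)*vv z^2*z*(Real.pi:ℂ) + (-8)*vv z^2*(x:ℂ)*(Real.pi:ℂ) + (-2)*vv z^2*(x:ℂ)*z^2*(Real.pi:ℂ) + (2)*vv z^2*(x:ℂ)^2*z*(Real.pi:ℂ) + (-8)*(s:ℂ)^2*z*(Real.pi:ℂ) + (8)*(s:ℂ)^2*(x:ℂ)*(Real.pi:ℂ) + (2)*(s:ℂ)^2*(x:ℂ)*z^2*(Real.pi:ℂ) + (-2)*(s:ℂ)^2*(x:ℂ)^2*z*(Real.pi:ℂ)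 + (2)*(s:ℂ)^2*vv z^2*z*(Real.pi:ℂ) + (-2)*(s:ℂ)^2*vv z^2*(x:ℂ)*(Real.pi:ℂ) + (-2)*(s:ℂ)^3*vv z*z*(Real.pi:ℂ) + (2)*(s:ℂ)^3*vv z*(x:ℂ)*(Real.pi:ℂ)) * hs2c + ((32)*z*(Real.pi:ℂ) + (-32)*(x:ℂ)*(Real.pi:ℂ) + (-8)*(x:ℂ)*z^2*(Real.pi:ℂ) + (8)*(x:ℂ)^3*(Real.pi:ℂ) + (2)*(x:ℂ)^3*z^2*(Real.pi:ℂ) + (-2)*(x:ℂ)^4*z*(Real.pi:ℂ)) * hv2 -/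

lemma NN_cont : Continuous (NN z) := by
  unfold NN
  apply Continuous.add
  · exact continuous_const.sub (continuous_const.mul Complex.continuous_ofReal)
  · exact continuous_const.mul (Complex.continuous_ofReal.comp
      (Real.continuous_sqrt.comp (by continuity)))

lemma GG_cont (hz : 0 < z.im) : ContinuousOn (GG z) (Set.Icc (-2 : ℝ) 2) := by
  intro x _
  apply ContinuousAt.continuousWithinAt
  unfold GG
  apply ContinuousAt.mul continuousAt_const
  apply ContinuousAt.sub
  · apply ContinuousAt.sub
    · exact (Complex.continuous_ofReal.comp
        (Real.continuous_sqrt.comp (by continuity))).continuousAt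
    · exact (continuous_const.mul (Complex.continuous_ofReal.comp
        (Real.continuous_arcsin.comp (continuous_id.div_const 2)))).continuousAt
  · apply ContinuousAt.mul continuousAt_const
    apply ContinuousAt.sub
    · exact (continuousAt_clog (NN_slit hz x)).comp NN_cont.continuousAt
    · exact ContinuousAt.comp (g := Complex.log) (f := fun y : ℝ => (y : ℂ) - z) (x := x)
        (continuousAt_clog (xz_slit hz x))
        ((Complex.continuous_ofReal.sub continuous_const).continuousAt)

lemma integrand_cont (hz : 0 < z.im) :
    Continuous fun x : ℝ => (rhoSC x : ℂ) / ((x : ℂ) - z) := by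
  apply Continuous.div
  · exact Complex.continuous_ofReal.comp (by unfold rhoSC; continuity)
  · exact Complex.continuous_ofReal.sub continuous_const
  · exact fun x => xz_ne hz x

lemma GG_two (hz : 0 < z.im) :
    GG z 2 = (1 / (2 * (Real.pi : ℂ))) * (-(z * ((Real.pi / 2 : ℝ) : ℂ))
      - vv z * (Real.log 2 : ℝ)) := by
  have e1 : Real.sqrt (4 - (2:ℝ) ^ 2) = 0 := by norm_num
  have e2 : Real.arcsin ((2:ℝ) / 2) = Real.pi / 2 := by norm_num [Real.arcsin_one]
  have h2mz : ((2:ℝ) : ℂ) - z ≠ 0 := xz_ne hz 2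
  have e3 : NN z 2 = ((2:ℝ) : ℂ) * (((2:ℝ) : ℂ) - z) := by
    rw [NN, e1]
    push_cast
    ring
  have e4 : Complex.log (NN z 2) - Complex.log (((2:ℝ) : ℂ) - z) = ((Real.log 2 : ℝ) : ℂ) := by
    rw [e3, Complex.log_ofReal_mul (by norm_num : (0:ℝ) < 2) h2mz]
    ring
  rw [GG, e1, e2, e4]
  push_cast
  ring

lemma GG_neg_two (hz : 0 < z.im) :
    GG z (-2) = (1 / (2 * (Real.pi : ℂ))) * (z * ((Real.pi / 2 : ℝ) : ℂ)
      - vv z * ((Real.log 2 : ℝ) + (Real.pi : ℂ) * Complex.I)) := by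
  have e1 : Real.sqrt (4 - (-2:ℝ) ^ 2) = 0 := by norm_num
  have e2 : Real.arcsin ((-2:ℝ) / 2) = -(Real.pi / 2) := by norm_num [Real.arcsin_neg_one]
  have him : 0 < ((2 : ℂ) + z).im := by simpa using hz
  have h2pz : (2 : ℂ) + z ≠ 0 := by
    intro h
    have : ((2:ℂ) + z).im = 0 := by rw [h]; simp
    simp at this
    exact hz.ne' this
  have e3 : NN z (-2) = ((2:ℝ) : ℂ) * ((2 : ℂ) + z) := by
    rw [NN, e1]
    push_cast
    ring
  have e5 : Complex.log (-((2:ℂ) + z)) = Complex.log ((2:ℂ) + z) - (Real.pi : ℂ) * Complex.I := by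
    rw [Complex.log, Complex.log, Complex.arg_neg_eq_arg_sub_pi_of_im_pos him]
    rw [norm_neg]
    push_cast
    ring
  have e6 : (((-2:ℝ)) : ℂ) - z = -((2:ℂ) + z) := by push_cast; ring
  have e4 : Complex.log (NN z (-2)) - Complex.log ((((-2:ℝ)) : ℂ) - z)
      = ((Real.log 2 : ℝ) : ℂ) + (Real.pi : ℂ) * Complex.I := by
    rw [e3, Complex.log_ofReal_mul (by norm_num : (0:ℝ) < 2) h2pz, e6, e5]
    ring
  rw [GG, e1, e2, e4]
  push_cast
  ring

lemma mSC_eq (hz : 0 < z.im) : mSC z = (Complex.I * vv z - z) / 2 := by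
  have hind : (fun x : ℝ => (rhoSC x : ℂ) / ((x : ℂ) - z))
      = Set.indicator (Set.Ioc (-2 : ℝ) 2) (fun x => (rhoSC x : ℂ) / ((x : ℂ) - z)) := by
    funext x
    by_cases hx : x ∈ Set.Ioc (-2 : ℝ) 2
    · rw [Set.indicator_of_mem hx]
    · rw [Set.indicator_of_notMem hx]
      have h0 : rhoSC x = 0 := by
        rw [rhoSC]
        have hm : max (4 - x ^ 2) 0 = 0 := by
          apply max_eq_right
          simp only [Set.mem_Ioc, not_and_or, not_lt, not_le] at hx
          rcases hx with h | h
          · nlinarith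
          · nlinarith
        rw [hm, Real.sqrt_zero, mul_zero]
      rw [h0]
      simp
  have hFTC : ∫ x in (-2 : ℝ)..2, (rhoSC x : ℂ) / ((x : ℂ) - z) = GG z 2 - GG z (-2) := by
    apply intervalIntegral.integral_eq_sub_of_hasDeriv_right_of_le (by norm_num) (GG_cont hz)
      (fun x hx => (GG_deriv hz x hx).hasDerivWithinAt)
    exact (integrand_cont hz).intervalIntegrable _ _
  have hm : mSC z = GG z 2 - GG z (-2) := by
    rw [mSC, hind, MeasureTheory.integral_indicator measurableSet_Ioc,
      ← intervalIntegral.integral_of_le (by norm_num : (-2:ℝ) ≤ 2)]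
    exact hFTC
  rw [hm, GG_two hz, GG_neg_two hz]
  have hπ : (Real.pi : ℂ) ≠ 0 := by exact_mod_cast Real.pi_ne_zero
  push_cast
  field_simp
  ring

end MSCaux

theorem mSC_inv_identity (z : ℂ) (hz : 0 < z.im) :
    (z + mSC z)⁻¹ = -mSC z := by
  have hm := MSCaux.mSC_eq hz
  have hv2 := MSCaux.vv_sq hz
  have hquad : mSC z ^ 2 + z * mSC z + 1 = 0 := by
    rw [hm]
    linear_combination ((MSCaux.vv z) ^ 2 / 4) * Complex.I_sq + (-(1 : ℂ) / 4) * hv2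
  have h1 : (-mSC z) * (z + mSC z) = 1 := by linear_combination -hquad
  exact inv_eq_of_mul_eq_one_left h1
end
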